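/- arXiv:0812.2266 — 7 statements merged into one kernel-verified Lean document; each statement's English description precedes it below -/
import Mathlib

section
/- Let (X, ∇, ⊥) be a partial commutative monoid (∇ : X × X ⇀ X a partial binary operation, associative and commutative where defined, with unit ⊥ ∈ X defined everywhere). Suppose X satisfies the relational Frobenius condition: for all i, j ∈ X, {(x,y) | i∇j and x∇y are both defined and equal} = {(x, y'∇j) | x∇y' defined and equal to i, and y'∇j defined} = {(i∇x', y) | x'∇y defined and equal to j, and i∇x' defined}. Then (X, ∇, ⊥) is an abelian group; in particular ∇ is totally defined and every element has an inverse. -/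
/-- A partial commutative monoid (represented relationally: `m x y z` means the partial
operation `x∇y` is defined with value `z`; single-valuedness makes it a partial operation)
satisfying the relational Frobenius condition is an abelian group: `∇` is totally defined
and every element has an inverse. -/
theorem partial_frobenius_monoid_is_group {X : Type*} (m : X → X → X → Prop) (e : X)
    (hsv : ∀ x y z w : X, m x y z → m x y w → z = w)
    (hassoc : ∀ a b c z : X, (∃ w, m a b w ∧ m w c z) ↔ (∃ w, m b c w ∧ m a w z))
    (hcomm : ∀ x y z : X, m x y z ↔ m y x z)
    (hunit : ∀ x : X, m e x x ∧ m x e x)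
    (hfrob₁ : ∀ a b x y : X, (∃ z, m a b z ∧ m x y z) ↔ (∃ u, m x u a ∧ m u b y))
    (hfrob₂ : ∀ a b x y : X, (∃ z, m a b z ∧ m x y z) ↔ (∃ u, m u y b ∧ m a u x)) :
    (∀ k l : X, ∃ z, m k l z) ∧ (∀ k : X, ∃ k', m k k' e ∧ m k' k e) := by
  have hinv : ∀ k : X, ∃ k', m k k' e ∧ m k' k e := by
    intro x
    have h := (hfrob₁ e x x e).mp ⟨x, (hunit x).1, (hunit x).2⟩
    exact h
  refine ⟨?_, hinv⟩
  intro k l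
  obtain ⟨k', hk1, hk2⟩ := hinv k
  have h : ∃ w, m k' k w ∧ m w l l := ⟨e, hk2, (hunit l).1⟩
  obtain ⟨w, hw1, _⟩ := (hassoc k' k l l).mp h
  exact ⟨w, hw1⟩
end

section
/- Let (X, ∇, Δ, ⊥, ⊤) be a classical structure in Rel, i.e., a commutative special Frobenius algebra with Δ = ∇ᵒᵖ and ⊤ = ⊥ᵒᵖ. Then for every element y ∈ X, the relation Υy = {(x, z) | z ∈ ∇(y, x)} ⊆ X × X is a partial bijection: both Υy and its converse are partial functions. -/
/-- A classical structure in `(Rel, ×, 1)` on a set `X`, given by a multiplication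
relation `m : X×X ⇸ X` (`m x y z` means `z ∈ ∇(x,y)`) and a unit relation `e : 1 ⇸ X`
(a subset of `X`), with `Δ = ∇ᵒᵖ` and `⊤ = ⊥ᵒᵖ`: a commutative internal monoid
satisfying the Frobenius condition and speciality, all expressed relationally. -/
structure RelClassicalStructure (X : Type*) (m : X → X → X → Prop) (e : X → Prop) :
    Prop where
  /-- relational associativity: `(∇▷X)∘∇ = (X◁∇)∘∇` -/
  assoc : ∀ a b c z : X, (∃ w, m a b w ∧ m w c z) ↔ (∃ w, m b c w ∧ m a w z)
  /-- relational left unit law -/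
  unit_left : ∀ x z : X, (∃ u, e u ∧ m u x z) ↔ x = z
  /-- relational right unit law -/
  unit_right : ∀ x z : X, (∃ u, e u ∧ m x u z) ↔ x = z
  /-- Frobenius condition `Δ∘∇ = (∇×X)∘(X×Δ)` -/
  frob₁ : ∀ a b x y : X, (∃ z, m a b z ∧ m x y z) ↔ (∃ u, m x u a ∧ m u b y)
  /-- Frobenius condition `Δ∘∇ = (X×∇)∘(Δ×X)` -/
  frob₂ : ∀ a b x y : X, (∃ z, m a b z ∧ m x y z) ↔ (∃ u, m u y b ∧ m a u x)
  /-- speciality `∇∘Δ = id_X` -/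
  special : ∀ x z : X, (∃ u v, m u v x ∧ m u v z) ↔ x = z
  /-- commutativity -/
  comm : ∀ x y z : X, m x y z ↔ m y x z


/-- For a classical structure `(X, ∇, Δ, ⊥, ⊤)` in `Rel`, the representation of every
element `y` is a partial bijection: the relation `Υy = {(x,z) | z ∈ ∇(y,x)}` and its
converse are both partial functions. -/
theorem classical_structure_repr_partial_bijection {X : Type*}
    (m : X → X → X → Prop) (e : X → Prop)
    (h : RelClassicalStructure X m e) (y : X) :
    (∀ x z z' : X, m y x z → m y x z' → z = z') ∧
    (∀ x x' z : X, m y x z → m y x' z → x = x') := by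
  -- functionality: immediate from speciality
  have func : ∀ a b z z' : X, m a b z → m a b z' → z = z' := by
    intro a b z z' h1 h2
    exact (h.special z z').mp ⟨a, b, h1, h2⟩
  refine ⟨fun x z z' h1 h2 => func y x z z' h1 h2, ?_⟩
  intro x x' z hx hx'
  -- a unit ε for y's component
  obtain ⟨ε, hε, hεy⟩ := (h.unit_left y y).mpr rfl
  -- m ε z z
  obtain ⟨w, hw1, hw2⟩ := (h.assoc ε y x z).mp ⟨y, hεy, hx⟩
  have hεz : m ε z z := by rwa [func y x w z hw1 hx] at hw2
  -- an "inverse" i of y: m i z x and m y i ε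
  obtain ⟨i, hiz, hyi⟩ := (h.frob₂ y x ε z).mp ⟨z, hx, hεz⟩
  -- m ε x' x, hence x' = x
  obtain ⟨w', hw1', hw2'⟩ := (h.assoc i y x' x).mpr ⟨z, hx', hiz⟩
  have hiy : m i y w' := hw1'
  have : w' = ε := func i y w' ε hiy ((h.comm y i ε).mp hyi)
  rw [this] at hw2'
  exact ((h.unit_left x' x).mp ⟨ε, hε, hw2'⟩).symm
end

section
/- Let (X, ∇, ⊥) be the monoid part of a special Frobenius algebra in Rel, where the unit ⊥ ⊆ X is a subset {φ_j}_{j∈J}. Then the sets X_j = {x ∈ X | x∇φ_j is defined and equals x} form a partition of X: they are pairwise disjoint and cover X. -/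
/-- A special Frobenius algebra in `(Rel, ×, 1)` on a set `X`, given by a multiplication
relation `m : X×X ⇸ X` (`m x y z` means `z ∈ ∇(x,y)`) and a unit relation `e : 1 ⇸ X`
(a subset of `X`), with `Δ = ∇ᵒᵖ` and `⊤ = ⊥ᵒᵖ`: an internal monoid satisfying the
Frobenius condition and speciality, all expressed relationally. -/
structure RelSpecialFrobenius (X : Type*) (m : X → X → X → Prop) (e : X → Prop) :
    Prop where
  /-- relational associativity: `(∇▷X)∘∇ = (X◁∇)∘∇` -/
  assoc : ∀ a b c z : X, (∃ w, m a b w ∧ m w c z) ↔ (∃ w, m b c w ∧ m a w z)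
  /-- relational left unit law -/
  unit_left : ∀ x z : X, (∃ u, e u ∧ m u x z) ↔ x = z
  /-- relational right unit law -/
  unit_right : ∀ x z : X, (∃ u, e u ∧ m x u z) ↔ x = z
  /-- Frobenius condition `Δ∘∇ = (∇×X)∘(X×Δ)` -/
  frob₁ : ∀ a b x y : X, (∃ z, m a b z ∧ m x y z) ↔ (∃ u, m x u a ∧ m u b y)
  /-- Frobenius condition `Δ∘∇ = (X×∇)∘(Δ×X)` -/
  frob₂ : ∀ a b x y : X, (∃ z, m a b z ∧ m x y z) ↔ (∃ u, m u y b ∧ m a u x)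
  /-- speciality `∇∘Δ = id_X` -/
  special : ∀ x z : X, (∃ u v, m u v x ∧ m u v z) ↔ x = z

/-- For a special Frobenius algebra in `Rel` with unit set `⊥ = {φ_j}`, the sets
`X_j = {x | x∇φ_j = x}` form a partition of `X`: they cover `X` and are pairwise
disjoint. -/
theorem special_frobenius_unit_partition {X : Type*}
    (m : X → X → X → Prop) (e : X → Prop)
    (h : RelSpecialFrobenius X m e) :
    (∀ x : X, ∃ φ, e φ ∧ m x φ x) ∧
    (∀ (x φ ψ : X), e φ → e ψ → m x φ x → m x ψ x → φ = ψ) := by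
  constructor
  · intro x
    exact (h.unit_right x x).mpr rfl
  · intro x φ ψ hφ hψ hxφ hxψ
    -- From frob₂ with a = x, b = φ, x = x, y = ψ, using z = x:
    obtain ⟨u, huψφ, _⟩ := (h.frob₂ x φ x ψ).mp ⟨x, hxφ, hxψ⟩
    -- m u ψ φ with e ψ gives u = φ via the right unit law
    have huφ : u = φ := (h.unit_right u φ).mp ⟨ψ, hψ, huψφ⟩
    rw [huφ] at huψφ
    -- m φ ψ φ with e φ gives ψ = φ via the left unit law
    exact ((h.unit_left ψ φ).mp ⟨φ, hφ, huψφ⟩).symm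
end

section
/- Every classical structure in Rel is a biproduct of abelian groups: if (X, ∇, Δ, ⊥, ⊤) is a commutative special Frobenius algebra in Rel with Δ = ∇ᵒᵖ and ⊤ = ⊥ᵒᵖ, then X is a disjoint union of subsets each carrying an abelian group structure whose multiplication graph is the restriction of ∇. -/
/-- Every classical structure in `Rel` is a biproduct (disjoint union) of abelian groups:
`X` is partitioned into blocks (indexed by the assignment `blk` of each element to the
unit element of its block) such that `∇` relates nothing across distinct blocks, and on
each block `∇` restricts to a total, single-valued, commutative group multiplication
with unit `blk x` and inverses. -/
theorem classical_structure_biproduct_of_abelian_groups {X : Type*}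
    (m : X → X → X → Prop) (e : X → Prop)
    (h : RelClassicalStructure X m e) :
    ∃ blk : X → X,
      (∀ x : X, e (blk x) ∧ m x (blk x) x ∧ m (blk x) x x) ∧
      (∀ x y z : X, m x y z → blk x = blk y ∧ blk z = blk x) ∧
      (∀ x y : X, blk x = blk y → ∃! z, m x y z) ∧
      (∀ x y z : X, m x y z → m y x z) ∧
      (∀ x : X, ∃ y, blk y = blk x ∧ m x y (blk x) ∧ m y x (blk x)) := by
  classical
  have sv : ∀ x y z z' : X, m x y z → m x y z' → z = z' := fun x y z z' h1 h2 =>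
    (h.special z z').mp ⟨x, y, h1, h2⟩
  have exu : ∀ x : X, ∃ u, e u ∧ m u x x := fun x => (h.unit_left x x).mpr rfl
  refine ⟨fun x => Classical.choose (exu x), ?_, ?_, ?_, ?_, ?_⟩
  all_goals
    have he : ∀ x, e (Classical.choose (exu x)) := fun x => (Classical.choose_spec (exu x)).1
    have hm : ∀ x, m (Classical.choose (exu x)) x x := fun x => (Classical.choose_spec (exu x)).2
    have uniq : ∀ u x, e u → m u x x → u = Classical.choose (exu x) := by
      intro u x hu hux
      have hL : ∃ w, m u (Classical.choose (exu x)) w ∧ m w x x :=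
        (h.assoc u (Classical.choose (exu x)) x x).mpr ⟨x, hm x, hux⟩
      obtain ⟨w, hw1, hw2⟩ := hL
      have hwe : Classical.choose (exu x) = w := (h.unit_left _ w).mp ⟨u, hu, hw1⟩
      subst hwe
      exact ((h.unit_left u _).mp ⟨_, he x, (h.comm _ _ _).mp hw1⟩)
    have hblk : ∀ x y z : X, m x y z →
        Classical.choose (exu x) = Classical.choose (exu y) ∧
        Classical.choose (exu z) = Classical.choose (exu x) := by
      intro x y z hxyz
      obtain ⟨w, hw1, hw2⟩ :=
        (h.assoc (Classical.choose (exu x)) x y z).mp ⟨x, hm x, hxyz⟩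
      have hwz : w = z := sv x y w z hw1 hxyz
      subst hwz
      have hz : Classical.choose (exu x) = Classical.choose (exu w) :=
        uniq _ _ (he x) hw2
      obtain ⟨v, hv1, hv2⟩ :=
        (h.assoc x (Classical.choose (exu x)) y w).mp ⟨x, (h.comm _ _ _).mp (hm x), hxyz⟩
      have hyv : y = v := (h.unit_left y v).mp ⟨_, he x, hv1⟩
      subst hyv
      exact ⟨uniq _ _ (he x) hv1, hz.symm⟩
  · exact fun x => ⟨he x, (h.comm _ _ _).mp (hm x), hm x⟩
  · exact hblk
  · intro x y hxy
    have hxy' : Classical.choose (exu x) = Classical.choose (exu y) := hxy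
    have hmy : m (Classical.choose (exu x)) y y := hxy' ▸ hm y
    obtain ⟨z, hz1, _⟩ := (h.frob₁ x y x y).mpr
      ⟨Classical.choose (exu x), (h.comm _ _ _).mp (hm x), hmy⟩
    exact ⟨z, hz1, fun z' hz' => sv x y z' z hz' hz1⟩
  · exact fun x y z hxyz => (h.comm _ _ _).mp hxyz
  · intro x
    obtain ⟨w, hw1, hw2⟩ := (h.frob₁ (Classical.choose (exu x)) x x (Classical.choose (exu x))).mp
      ⟨x, hm x, (h.comm _ _ _).mp (hm x)⟩
    exact ⟨w, (hblk x w _ hw1).1.symm, hw1, hw2⟩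
end

section
/- A relation R : X ⇸ Y is a monomorphism in Rel if and only if the direct-image map ℘R : ℘X → ℘Y, U ↦ {y | ∃x ∈ U. xRy}, is injective. -/
/-!
The row of `S ≫ R` at `w` is the direct image under `R` of the row of `S` at `w`, and a relation
is determined by its rows, so an injective direct image cancels on the right. Conversely, a subset
`U ⊆ X` is the row of the relation `1 ⇸ X` with graph `1 × U`, whose composite with `R` has
graph `1 × ℘R U`.
-/

open CategoryTheory SetRel

namespace SetRel

variable {α β γ : Type*}

lemma ext_image_singleton {R S : SetRel α β} (h : ∀ a, R.image {a} = S.image {a}) : R = S := by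
  ext ⟨a, b⟩
  simpa using Set.ext_iff.mp (h a) b

lemma preimage_snd_comp (s : Set β) (R : SetRel β γ) :
    (Prod.snd ⁻¹' s : SetRel α β) ○ R = Prod.snd ⁻¹' R.image s := by
  ext ⟨a, c⟩
  simp [mem_comp, mem_image]

lemma comp_left_cancel_of_injective_image {R : SetRel β γ} (hR : Function.Injective R.image)
    {S T : SetRel α β} (h : S ○ R = T ○ R) : S = T :=
  ext_image_singleton fun a => hR <| by rw [← image_comp, ← image_comp, h]

lemma injective_image_of_comp_left_cancel [Nonempty α] {R : SetRel β γ}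
    (hR : ∀ S T : SetRel α β, S ○ R = T ○ R → S = T) : Function.Injective R.image :=
  fun s t hst => Set.preimage_injective.mpr Prod.snd_surjective <|
    hR _ _ <| by rw [preimage_snd_comp, preimage_snd_comp, hst]

end SetRel

namespace CategoryTheory.RelCat

lemma mono_iff_injective_image {X Y : RelCat.{u}} (R : X ⟶ Y) :
    Mono R ↔ Function.Injective R.rel.image := by
  refine ⟨fun _ => ?_, fun hR => ⟨fun S T hST => ?_⟩⟩
  · let W : RelCat.{u} := PUnit
    refine injective_image_of_comp_left_cancel (α := W) fun S T hST => ?_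
    exact congrArg Hom.rel <| (cancel_mono R).mp (Hom.ext (Hom.ofRel S ≫ R) (Hom.ofRel T ≫ R) hST)
  · exact Hom.ext _ _ <| comp_left_cancel_of_injective_image hR congr(($hST).rel)

end CategoryTheory.RelCat

/-- A relation `R : X ⇸ Y` is a monomorphism in `Rel` if and only if the induced
direct-image map `℘R : ℘X → ℘Y`, `U ↦ {y | ∃ x ∈ U, xRy}`, is injective. -/
theorem rel_mono_iff_direct_image_injective {X Y : RelCat} (R : X ⟶ Y) :
    Mono R ↔ Function.Injective (fun U : Set X => {y : Y | ∃ x, @Membership.mem X (Set X) Set.instMembership U x ∧ (x, y) ∈ R.rel}) :=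
  RelCat.mono_iff_injective_image R
end

section
/- For a classical structure on X in Rel that is the disjoint union of abelian groups X = ⨆_{j∈J} X_j, the classical elements are exactly the subsets X_j for j ∈ J. -/
/-- The multiplication relation of the classical structure on a disjoint union of
abelian groups: `∇` relates `(u,v)` to `z` iff `u,v` lie in the same component `j` and
`z` is their sum there. -/
def sigmaMul {J : Type*} (G : J → Type*) [∀ j, AddCommGroup (G j)]
    (u v z : Σ j, G j) : Prop :=
  ∃ (j : J) (a b : G j), u = ⟨j, a⟩ ∧ v = ⟨j, b⟩ ∧ z = ⟨j, a + b⟩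

/-- For the classical structure on a disjoint union `X = ⨆_j X_j` of abelian groups in
`Rel` (with `Δ = ∇ᵒᵖ` and counit the set of unit elements), the classical elements
(subsets `φ` with `Δ∘φ = φ×φ` and `⊤∘φ = id_1`) are exactly the components `X_j`. -/
theorem classical_elements_of_disjoint_union {J : Type*} (G : J → Type*)
    [∀ j, AddCommGroup (G j)] (φ : Set (Σ j, G j)) :
    ((∀ u v : Σ j, G j, (∃ z ∈ φ, sigmaMul G u v z) ↔ (u ∈ φ ∧ v ∈ φ)) ∧
      (∃ z ∈ φ, ∃ j : J, z = ⟨j, 0⟩)) ↔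
    (∃ j : J, φ = {x : Σ j, G j | x.1 = j}) := by
  constructor
  · rintro ⟨hmul, z, hz, j, rfl⟩
    refine ⟨j, ?_⟩
    ext ⟨k, c⟩
    simp only [Set.mem_setOf_eq]
    constructor
    · intro hc
      obtain ⟨z', hz', j', a, b, hu, hv, hzz⟩ := (hmul ⟨k, c⟩ ⟨j, 0⟩).mpr ⟨hc, hz⟩
      obtain ⟨rfl, -⟩ := Sigma.mk.inj_iff.mp hu
      exact (Sigma.mk.inj_iff.mp hv).1.symm
    · rintro rfl
      exact ((hmul ⟨k, c⟩ ⟨k, -c⟩).mp ⟨⟨k, 0⟩, hz, k, c, -c, rfl, rfl, by rw [add_neg_cancel]⟩).1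
  · rintro ⟨j, rfl⟩
    constructor
    · intro u v
      constructor
      · rintro ⟨z, hz, j', a, b, rfl, rfl, rfl⟩
        exact ⟨hz, hz⟩
      · rintro ⟨hu, hv⟩
        obtain ⟨ju, a⟩ := u
        obtain ⟨jv, b⟩ := v
        simp only [Set.mem_setOf_eq] at hu hv
        subst hu; subst hv
        exact ⟨⟨_, a + b⟩, rfl, _, a, b, rfl, rfl, rfl⟩
    · exact ⟨⟨j, 0⟩, rfl, j, rfl⟩
end

section
/- Let (X, ∇, Δ, ⊥, ⊤) be a special Frobenius algebra in Rel with Δ = ∇ᵒᵖ, and suppose the unit ⊥ ⊆ X is a singleton {e}. Then ∇ is a total operation: for all k, ℓ ∈ X, ∇(k, ℓ) is nonempty (hence a singleton), and (X, ∇, e) is a group in Set. -/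
/-- If the unit of a special Frobenius algebra in `Rel` is a singleton `{e₀}`, then `∇`
is a total (single-valued) operation and `(X, ∇, e₀)` is a group in `Set`: associative,
with `e₀` a two-sided unit and inverses for all elements. -/
theorem special_frobenius_singleton_unit_group {X : Type*}
    (m : X → X → X → Prop) (e₀ : X)
    (h : RelSpecialFrobenius X m (fun u => u = e₀)) :
    (∀ k l : X, ∃! z, m k l z) ∧
    (∀ a b c ab bc : X, m a b ab → m b c bc → ∀ z, (m ab c z ↔ m a bc z)) ∧
    (∀ k : X, m e₀ k k ∧ m k e₀ k) ∧
    (∀ k : X, ∃ k', m k k' e₀ ∧ m k' k e₀) := by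
  obtain ⟨assoc, ul, ur, f1, f2, sp⟩ := h
  have he : ∀ x, m e₀ x x := fun x => by
    obtain ⟨u, hu, hm⟩ := (ul x x).mpr rfl; rwa [hu] at hm
  have he' : ∀ x, m x e₀ x := fun x => by
    obtain ⟨u, hu, hm⟩ := (ur x x).mpr rfl; rwa [hu] at hm
  have huniq : ∀ u v x z, m u v x → m u v z → x = z :=
    fun u v x z h1 h2 => (sp x z).mp ⟨u, v, h1, h2⟩
  refine ⟨?_, ?_, fun k => ⟨he k, he' k⟩, ?_⟩
  · intro k l
    obtain ⟨z, hz, _⟩ := (f1 k l k l).mpr ⟨e₀, he' k, he l⟩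
    exact ⟨z, hz, fun y hy => huniq k l y z hy hz⟩
  · intro a b c ab bc hab hbc z
    constructor
    · intro hz
      obtain ⟨w, hw, hw2⟩ := (assoc a b c z).mp ⟨ab, hab, hz⟩
      rwa [huniq b c w bc hw hbc] at hw2
    · intro hz
      obtain ⟨w, hw, hw2⟩ := (assoc a b c z).mpr ⟨bc, hbc, hz⟩
      rwa [huniq a b w ab hw hab] at hw2
  · intro k
    obtain ⟨u, h1, h2⟩ := (f2 k e₀ e₀ k).mp ⟨k, he' k, he k⟩
    exact ⟨u, h2, h1⟩
end
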